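/- arXiv:2312.15938 — 2 statements merged into one kernel-verified Lean document; each statement's English description precedes it below -/
import Mathlib

section
/- Let N be a symmetric real n×n matrix solving the ARE. Let z : [0, ∞) → ℝⁿ be differentiable and v : [0, ∞) → ℝᵐ be continuous with ż(t) = −Az(t) − Bv(t) for all t ≥ 0 and z(t) → 0 as t → ∞, and suppose that both t ↦ ‖z(t)‖²_Q + ‖v(t)‖²_R and t ↦ ‖v(t) + R⁻¹BᵀN z(t)‖²_R are integrable on [0, ∞). Then ½∫₀^∞ (‖z(t)‖²_Q + ‖v(t)‖²_R) dt = −½⟨N z(0), z(0)⟩ + ½∫₀^∞ ‖v(t) + R⁻¹BᵀN z(t)‖²_R dt. -/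
open Matrix MeasureTheory

/-!
Along the backward dynamics `ż = -Az - Bv`, the Riccati equation turns the derivative of the
quadratic form `V(t) = ⟨N z(t), z(t)⟩` into the difference of the two integrands: completing the
square in `v` gives `V' = (‖z‖²_Q + ‖v‖²_R) - ‖v + R⁻¹BᵀN z‖²_R`. Integrating over `(0, ∞)` and
using `V(t) → 0` (since `z(t) → 0`) yields the identity.
-/

section Calculus

variable {𝕜 ι κ : Type*} [NontriviallyNormedField 𝕜] [Fintype ι]
  {u v : 𝕜 → ι → 𝕜} {u' v' : ι → 𝕜} {s : Set 𝕜} {t : 𝕜}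

theorem HasDerivWithinAt.dotProduct (hu : HasDerivWithinAt u u' s t)
    (hv : HasDerivWithinAt v v' s t) :
    HasDerivWithinAt (fun τ => u τ ⬝ᵥ v τ) (u' ⬝ᵥ v t + u t ⬝ᵥ v') s t :=
  (HasDerivWithinAt.fun_sum fun i (_ : i ∈ Finset.univ) =>
    (hasDerivWithinAt_pi.1 hu i).fun_mul (hasDerivWithinAt_pi.1 hv i)).congr_deriv
    Finset.sum_add_distrib

theorem HasDerivWithinAt.matrix_mulVec (M : Matrix κ ι 𝕜) (hu : HasDerivWithinAt u u' s t) :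
    HasDerivWithinAt (fun τ => M *ᵥ u τ) (M *ᵥ u') s t :=
  hasDerivWithinAt_pi.2 fun i => (hasDerivWithinAt_const t s (M i)).dotProduct hu |>.congr_deriv
    (by simp [mulVec])

end Calculus

theorem integral_Ioi_of_hasDerivWithinAt_Ici {f f' : ℝ → ℝ} {a m : ℝ}
    (hderiv : ∀ x ∈ Set.Ici a, HasDerivWithinAt f (f' x) (Set.Ici a) x)
    (f'int : IntegrableOn f' (Set.Ioi a)) (hf : Filter.Tendsto f Filter.atTop (nhds m)) :
    ∫ x in Set.Ioi a, f' x = m - f a :=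
  integral_Ioi_of_hasDerivAt_of_tendsto (hderiv a Set.self_mem_Ici).continuousWithinAt
    (fun x hx => (hderiv x (Set.Ioi_subset_Ici_self hx)).hasDerivAt (Ici_mem_nhds hx)) f'int hf

section Riccati

variable {α ι κ : Type*} [CommRing α] [Fintype ι] [Fintype κ] [DecidableEq κ]
  {A N Q : Matrix ι ι α} {B : Matrix ι κ α} {R : Matrix κ κ α}

theorem mulVec_dotProduct_comm_of_isSymm {M : Matrix ι ι α} (hM : M.IsSymm) (x y : ι → α) :
    M *ᵥ x ⬝ᵥ y = M *ᵥ y ⬝ᵥ x := by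
  rw [dotProduct_comm, ← dotProduct_transpose_mulVec, hM.eq, dotProduct_comm]

theorem mulVec_dotProduct_self_of_riccati (hN : N.IsSymm)
    (hARE : Aᵀ * N + N * A - N * B * R⁻¹ * Bᵀ * N = -Q) (w : ι → α) :
    Q *ᵥ w ⬝ᵥ w = (Bᵀ * N) *ᵥ w ⬝ᵥ (R⁻¹ * Bᵀ * N) *ᵥ w - 2 * (N *ᵥ w ⬝ᵥ A *ᵥ w) := by
  have hQ : Q = N * B * (R⁻¹ * Bᵀ * N) - Aᵀ * N - N * A := by
    rw [← neg_neg Q, ← hARE]; simp only [Matrix.mul_assoc]; abel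
  have hBRB : (N * B * (R⁻¹ * Bᵀ * N)) *ᵥ w ⬝ᵥ w = (Bᵀ * N) *ᵥ w ⬝ᵥ (R⁻¹ * Bᵀ * N) *ᵥ w := by
    have hNB : N * B = (Bᵀ * N)ᵀ := by rw [transpose_mul, transpose_transpose, hN.eq]
    rw [hNB, ← mulVec_mulVec, dotProduct_comm, dotProduct_transpose_mulVec, dotProduct_comm]
  have hAN : (Aᵀ * N) *ᵥ w ⬝ᵥ w = N *ᵥ w ⬝ᵥ A *ᵥ w := by
    rw [← mulVec_mulVec, dotProduct_comm, dotProduct_transpose_mulVec]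
  have hNA : (N * A) *ᵥ w ⬝ᵥ w = N *ᵥ w ⬝ᵥ A *ᵥ w := by
    rw [← mulVec_mulVec, mulVec_dotProduct_comm_of_isSymm hN]
  rw [hQ, sub_mulVec, sub_mulVec, sub_dotProduct, sub_dotProduct, hBRB, hAN, hNA]
  ring

theorem riccati_completion_of_square (hR : R.IsSymm) (hRdet : IsUnit R.det) (hN : N.IsSymm)
    (hARE : Aᵀ * N + N * A - N * B * R⁻¹ * Bᵀ * N = -Q) (w : ι → α) (u : κ → α) :
    R *ᵥ (u + (R⁻¹ * Bᵀ * N) *ᵥ w) ⬝ᵥ (u + (R⁻¹ * Bᵀ * N) *ᵥ w)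
      = Q *ᵥ w ⬝ᵥ w + R *ᵥ u ⬝ᵥ u + 2 * (N *ᵥ w ⬝ᵥ (A *ᵥ w + B *ᵥ u)) := by
  have hRK : R *ᵥ ((R⁻¹ * Bᵀ * N) *ᵥ w) = (Bᵀ * N) *ᵥ w := by
    rw [mulVec_mulVec, ← Matrix.mul_assoc, ← Matrix.mul_assoc, mul_nonsing_inv R hRdet,
      Matrix.one_mul]
  have hcross : (Bᵀ * N) *ᵥ w ⬝ᵥ u = N *ᵥ w ⬝ᵥ B *ᵥ u := by
    rw [← mulVec_mulVec, dotProduct_comm, dotProduct_transpose_mulVec]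
  rw [mulVec_add, add_dotProduct, dotProduct_add, dotProduct_add,
    mulVec_dotProduct_comm_of_isSymm hR u ((R⁻¹ * Bᵀ * N) *ᵥ w), hRK, hcross,
    mulVec_dotProduct_self_of_riccati hN hARE, dotProduct_add]
  ring

end Riccati

theorem hasDerivWithinAt_quadForm_of_riccati {𝕜 ι κ : Type*} [NontriviallyNormedField 𝕜]
    [Fintype ι] [Fintype κ] [DecidableEq κ] {A N Q : Matrix ι ι 𝕜} {B : Matrix ι κ 𝕜}
    {R : Matrix κ κ 𝕜} (hR : R.IsSymm) (hRdet : IsUnit R.det) (hN : N.IsSymm)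
    (hARE : Aᵀ * N + N * A - N * B * R⁻¹ * Bᵀ * N = -Q) {z : 𝕜 → ι → 𝕜} {u : κ → 𝕜}
    {s : Set 𝕜} {t : 𝕜} (hz : HasDerivWithinAt z (-(A *ᵥ z t) - B *ᵥ u) s t) :
    HasDerivWithinAt (fun τ => N *ᵥ z τ ⬝ᵥ z τ)
      (Q *ᵥ z t ⬝ᵥ z t + R *ᵥ u ⬝ᵥ u
        - R *ᵥ (u + (R⁻¹ * Bᵀ * N) *ᵥ z t) ⬝ᵥ (u + (R⁻¹ * Bᵀ * N) *ᵥ z t)) s t := by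
  refine ((hz.matrix_mulVec N).dotProduct hz).congr_deriv ?_
  rw [mulVec_dotProduct_comm_of_isSymm hN, riccati_completion_of_square hR hRdet hN hARE,
    ← neg_add', dotProduct_neg]
  ring

theorem riccati_completion_of_square_backward_general
    (n m : ℕ)
    (A : Matrix (Fin n) (Fin n) ℝ) (B : Matrix (Fin n) (Fin m) ℝ)
    (Q : Matrix (Fin n) (Fin n) ℝ)
    (R : Matrix (Fin m) (Fin m) ℝ) (hR : R.PosDef)
    (N : Matrix (Fin n) (Fin n) ℝ) (hNsymm : Nᵀ = N)
    (hARE : Aᵀ * N + N * A - N * B * R⁻¹ * Bᵀ * N = -Q)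
    (z : ℝ → Fin n → ℝ) (v : ℝ → Fin m → ℝ)
    (hz : ∀ t ∈ Set.Ici (0 : ℝ),
      HasDerivWithinAt z (-(A.mulVec (z t)) - B.mulVec (v t)) (Set.Ici 0) t)
    (hzlim : Filter.Tendsto z Filter.atTop (nhds 0))
    (hint1 : IntegrableOn
      (fun t => Q.mulVec (z t) ⬝ᵥ z t + R.mulVec (v t) ⬝ᵥ v t) (Set.Ici 0))
    (hint2 : IntegrableOn
      (fun t => R.mulVec (v t + (R⁻¹ * Bᵀ * N).mulVec (z t)) ⬝ᵥ
        (v t + (R⁻¹ * Bᵀ * N).mulVec (z t))) (Set.Ici 0)) :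
    (1 / 2) * ∫ t in Set.Ioi (0 : ℝ), (Q.mulVec (z t) ⬝ᵥ z t + R.mulVec (v t) ⬝ᵥ v t)
      = -(1 / 2) * (N.mulVec (z 0) ⬝ᵥ z 0)
        + (1 / 2) * ∫ t in Set.Ioi (0 : ℝ),
            R.mulVec (v t + (R⁻¹ * Bᵀ * N).mulVec (z t)) ⬝ᵥ
              (v t + (R⁻¹ * Bᵀ * N).mulVec (z t)) := by
  have hRsymm : R.IsSymm := isHermitian_iff_isSymm.1 hR.isHermitian
  have hRdet : IsUnit R.det := (isUnit_iff_isUnit_det R).1 hR.isUnit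
  have hint1' := hint1.mono_set Set.Ioi_subset_Ici_self
  have hint2' := hint2.mono_set Set.Ioi_subset_Ici_self
  have hV_tendsto : Filter.Tendsto (fun t => N *ᵥ z t ⬝ᵥ z t) Filter.atTop (nhds 0) := by
    have hV_cont : Continuous fun x : Fin n → ℝ => N *ᵥ x ⬝ᵥ x :=
      (continuous_const.matrix_mulVec continuous_id).dotProduct continuous_id
    simpa [Function.comp_def] using (hV_cont.tendsto 0).comp hzlim
  have hFTC := integral_Ioi_of_hasDerivWithinAt_Ici
    (fun t ht => hasDerivWithinAt_quadForm_of_riccati hRsymm hRdet hNsymm hARE (hz t ht))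
    (hint1'.sub hint2') hV_tendsto
  rw [integral_sub hint1' hint2'] at hFTC
  linarith

/-- completion-of-square identity for the backward dynamics and a symmetric
solution of the algebraic Riccati equation. -/
theorem riccati_completion_of_square_backward
    (n m : ℕ) (hn : 1 ≤ n) (hm : 1 ≤ m)
    (A : Matrix (Fin n) (Fin n) ℝ) (B : Matrix (Fin n) (Fin m) ℝ)
    (Q : Matrix (Fin n) (Fin n) ℝ) (hQ : Q.PosDef)
    (R : Matrix (Fin m) (Fin m) ℝ) (hR : R.PosDef)
    (N : Matrix (Fin n) (Fin n) ℝ) (hNsymm : Nᵀ = N)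
    (hARE : Aᵀ * N + N * A - N * B * R⁻¹ * Bᵀ * N = -Q)
    (z : ℝ → Fin n → ℝ) (v : ℝ → Fin m → ℝ)
    (hz : ∀ t ∈ Set.Ici (0 : ℝ),
      HasDerivWithinAt z (-(A.mulVec (z t)) - B.mulVec (v t)) (Set.Ici 0) t)
    (hv : ContinuousOn v (Set.Ici 0))
    (hzlim : Filter.Tendsto z Filter.atTop (nhds 0))
    (hint1 : IntegrableOn
      (fun t => Q.mulVec (z t) ⬝ᵥ z t + R.mulVec (v t) ⬝ᵥ v t) (Set.Ici 0))
    (hint2 : IntegrableOn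
      (fun t => R.mulVec (v t + (R⁻¹ * Bᵀ * N).mulVec (z t)) ⬝ᵥ
        (v t + (R⁻¹ * Bᵀ * N).mulVec (z t))) (Set.Ici 0)) :
    (1 / 2) * ∫ t in Set.Ioi (0 : ℝ), (Q.mulVec (z t) ⬝ᵥ z t + R.mulVec (v t) ⬝ᵥ v t)
      = -(1 / 2) * (N.mulVec (z 0) ⬝ᵥ z 0)
        + (1 / 2) * ∫ t in Set.Ioi (0 : ℝ),
            R.mulVec (v t + (R⁻¹ * Bᵀ * N).mulVec (z t)) ⬝ᵥ
              (v t + (R⁻¹ * Bᵀ * N).mulVec (z t)) :=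
  riccati_completion_of_square_backward_general n m A B Q R hR N hNsymm hARE z v hz hzlim hint1
    hint2
end

section
/- Let N be a symmetric negative definite solution of the ARE, set A₊ = A − BR⁻¹BᵀN, and assume there are M ≥ 1 and ν > 0 with ‖exp(−tA₊)‖ ≤ M e^{−νt} for all t ≥ 0. Fix z₁ ∈ ℝⁿ. Then: (a) the pair z_b(t) = exp(−tA₊) z₁, v_b(t) = −R⁻¹BᵀN z_b(t) satisfies ż_b = −A z_b − B v_b, z_b(0) = z₁, z_b(t) → 0 as t → ∞, and ½∫₀^∞ (‖z_b(t)‖²_Q + ‖v_b(t)‖²_R) dt = −½⟨N z₁, z₁⟩; (b) every pair (z, v) with z differentiable, v continuous, ż = −Az − Bv, z(0) = z₁, z(t) → 0 as t → ∞ and t ↦ ‖z(t)‖²_Q + ‖v(t)‖²_R integrable on [0, ∞) satisfies ½∫₀^∞ (‖z(t)‖²_Q + ‖v(t)‖²_R) dt ≥ −½⟨N z₁, z₁⟩. -/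
open Matrix MeasureTheory Filter Topology Set

/-!
Completing the square with the Riccati equation: along any solution of `ż = -A z - B v`,
`d/dt ⟨N z, z⟩ = ‖z‖²_Q + ‖v‖²_R - ‖v + R⁻¹BᵀN z‖²_R`.
For the feedback `v_b = -R⁻¹BᵀN z_b` the square vanishes, so the running cost is exactly the
derivative of `⟨N z_b, z_b⟩`, which tends to `0` by the exponential stability of `A₊`; integrating
gives the value `-⟨N z₁, z₁⟩`. For any other admissible pair the derivative is at most the
running cost, and integrating over `[0, T]` and letting `T → ∞` gives the lower bound.
-/

section Calculus

variable {ι κ : Type*} [Fintype ι] [Fintype κ] {z : ℝ → ι → ℝ} {z' : ι → ℝ} {t : ℝ}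

theorem HasDerivAt.matrix_mulVec (P : Matrix κ ι ℝ) (hz : HasDerivAt z z' t) :
    HasDerivAt (fun t => P *ᵥ z t) (P *ᵥ z') t :=
  ((mulVecLin P).toContinuousLinearMap.hasFDerivAt (x := z t)).comp_hasDerivAt t hz

theorem HasDerivAt.dotProduct {y : ℝ → ι → ℝ} {y' : ι → ℝ}
    (hy : HasDerivAt y y' t) (hz : HasDerivAt z z' t) :
    HasDerivAt (fun t => y t ⬝ᵥ z t) (y' ⬝ᵥ z t + y t ⬝ᵥ z') t := by
  simpa only [_root_.dotProduct, Pi.mul_apply, ← Finset.sum_add_distrib] using HasDerivAt.fun_sum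
    (u := Finset.univ) fun i _ => (hasDerivAt_pi.1 hy i).mul (hasDerivAt_pi.1 hz i)

theorem hasDerivAt_exp_smul_mulVec [DecidableEq ι] (X : Matrix ι ι ℝ) (v : ι → ℝ) (t : ℝ) :
    HasDerivAt (fun s : ℝ => NormedSpace.exp (s • X) *ᵥ v)
      (X *ᵥ (NormedSpace.exp (t • X) *ᵥ v)) t := by
  let _ : NormedRing (Matrix ι ι ℝ) := Matrix.linftyOpNormedRing
  let _ : NormedAlgebra ℝ (Matrix ι ι ℝ) := Matrix.linftyOpNormedAlgebra
  rw [mulVec_mulVec]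
  exact ((LinearMap.applyₗ v ∘ₗ toLin'.toLinearMap).toContinuousLinearMap.hasFDerivAt
    (x := NormedSpace.exp (t • X))).comp_hasDerivAt t (hasDerivAt_exp_smul_const' X t)

theorem norm_le_sqrt_dotProduct_self (x : ι → ℝ) : ‖x‖ ≤ √(x ⬝ᵥ x) := by
  refine (pi_norm_le_iff_of_nonneg (Real.sqrt_nonneg _)).2 fun i => ?_
  rw [Real.norm_eq_abs, ← Real.sqrt_sq_eq_abs, sq]
  exact Real.sqrt_le_sqrt (Finset.single_le_sum (f := fun j => x j * x j)
    (fun j _ => mul_self_nonneg (x j)) (Finset.mem_univ i))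

theorem tendsto_zero_of_sqrt_dotProduct_self_le {α : Type*} {l : Filter α} {x : α → ι → ℝ}
    {f : α → ℝ} (hf : Tendsto f l (𝓝 0)) (hle : ∀ᶠ a in l, √(x a ⬝ᵥ x a) ≤ f a) :
    Tendsto x l (𝓝 0) :=
  squeeze_zero_norm' (hle.mono fun _ h => (norm_le_sqrt_dotProduct_self _).trans h) hf

theorem tendsto_mul_exp_neg_mul_mul_atTop (M c : ℝ) {ν : ℝ} (hν : 0 < ν) :
    Tendsto (fun t => M * Real.exp (-ν * t) * c) atTop (𝓝 0) := by
  simpa using ((Real.tendsto_exp_atBot.comp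
    (tendsto_id.const_mul_atTop_of_neg (neg_lt_zero.2 hν))).const_mul M).mul_const c

theorem continuous_mulVec_dotProduct_self (P : Matrix ι ι ℝ) :
    Continuous fun x : ι → ℝ => P *ᵥ x ⬝ᵥ x :=
  (continuous_const.matrix_mulVec continuous_id).dotProduct continuous_id

theorem Filter.Tendsto.mulVec_dotProduct_self {α : Type*} {l : Filter α} {x : α → ι → ℝ}
    (P : Matrix ι ι ℝ) (hx : Tendsto x l (𝓝 0)) : Tendsto (fun a => P *ᵥ x a ⬝ᵥ x a) l (𝓝 0) :=
  ((continuous_mulVec_dotProduct_self P).tendsto' 0 0 (by simp)).comp hx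

theorem sub_le_integral_Ioi_of_hasDerivAt_of_le {g g' φ : ℝ → ℝ} {a l : ℝ}
    (hcont : ContinuousOn g (Ici a)) (hderiv : ∀ x ∈ Ioi a, HasDerivAt g (g' x) x)
    (hφ : IntegrableOn φ (Ioi a)) (hle : ∀ x ∈ Ioi a, g' x ≤ φ x)
    (hg : Tendsto g atTop (𝓝 l)) :
    l - g a ≤ ∫ x in Ioi a, φ x := by
  have hpartial : ∀ᶠ b in atTop, g b - g a ≤ ∫ x in a..b, φ x := by
    filter_upwards [eventually_ge_atTop a] with b hab
    refine intervalIntegral.sub_le_integral_of_hasDeriv_right_of_le hab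
      (hcont.mono Icc_subset_Ici_self) (fun x hx => (hderiv x hx.1).hasDerivWithinAt)
      ?_ (fun x hx => hle x hx.1)
    exact Iff.mpr integrableOn_Icc_iff_integrableOn_Ioc (hφ.mono_set Ioc_subset_Ioi_self)
  exact le_of_tendsto_of_tendsto (hg.sub_const (g a))
    (intervalIntegral_tendsto_integral_Ioi a hφ tendsto_id) hpartial

end Calculus

theorem Matrix.mulVec_dotProduct_eq_dotProduct_transpose_mulVec {ι κ : Type*} [Fintype ι]
    [Fintype κ] (P : Matrix κ ι ℝ) (x : ι → ℝ) (y : κ → ℝ) :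
    P *ᵥ x ⬝ᵥ y = x ⬝ᵥ Pᵀ *ᵥ y := by
  rw [dotProduct_comm, dotProduct_transpose_mulVec]

theorem Matrix.PosSemidef.mulVec_dotProduct_self_nonneg {ι : Type*} [Fintype ι]
    {P : Matrix ι ι ℝ} (hP : P.PosSemidef) (x : ι → ℝ) : 0 ≤ P *ᵥ x ⬝ᵥ x := by
  simpa [dotProduct_comm] using hP.dotProduct_mulVec_nonneg x

section Riccati

variable {n m : Type*} [Fintype n] [Fintype m] [DecidableEq m]
  {A Q N : Matrix n n ℝ} {B : Matrix n m ℝ} {R : Matrix m m ℝ}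

theorem riccati_dotProduct_identity (hR : R.IsSymm) (hRdet : IsUnit R.det) (hN : N.IsSymm)
    (hARE : Aᵀ * N + N * A - N * B * R⁻¹ * Bᵀ * N = -Q) (x : n → ℝ) (u : m → ℝ) :
    N *ᵥ (-(A *ᵥ x) - B *ᵥ u) ⬝ᵥ x + N *ᵥ x ⬝ᵥ (-(A *ᵥ x) - B *ᵥ u)
      = Q *ᵥ x ⬝ᵥ x + R *ᵥ u ⬝ᵥ u
        - R *ᵥ (u + (R⁻¹ * Bᵀ * N) *ᵥ x) ⬝ᵥ (u + (R⁻¹ * Bᵀ * N) *ᵥ x) := by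
  have hARE_x := congrArg (fun P => P *ᵥ x ⬝ᵥ x) hARE
  simp only [sub_mulVec, add_mulVec, neg_mulVec, ← mulVec_mulVec, sub_dotProduct, add_dotProduct,
    neg_dotProduct] at hARE_x
  have hRRinv : R *ᵥ (R⁻¹ *ᵥ (Bᵀ *ᵥ (N *ᵥ x))) = Bᵀ *ᵥ (N *ᵥ x) := by
    rw [mulVec_mulVec, mul_nonsing_inv R hRdet, one_mulVec]
  set a := N *ᵥ x
  set w := Bᵀ *ᵥ a
  set y := R⁻¹ *ᵥ w
  have hgain : (R⁻¹ * Bᵀ * N) *ᵥ x = y := by simp only [y, w, a, mulVec_mulVec, Matrix.mul_assoc]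
  have hAtN : Aᵀ *ᵥ a ⬝ᵥ x = a ⬝ᵥ A *ᵥ x := by
    rw [mulVec_dotProduct_eq_dotProduct_transpose_mulVec, transpose_transpose]
  have hNA : N *ᵥ (A *ᵥ x) ⬝ᵥ x = a ⬝ᵥ A *ᵥ x := by
    rw [mulVec_dotProduct_eq_dotProduct_transpose_mulVec, hN.eq, dotProduct_comm]
  have hNB (v : m → ℝ) : N *ᵥ (B *ᵥ v) ⬝ᵥ x = v ⬝ᵥ w := by
    rw [mulVec_dotProduct_eq_dotProduct_transpose_mulVec, hN.eq,
      mulVec_dotProduct_eq_dotProduct_transpose_mulVec]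
  have hNxB (v : m → ℝ) : a ⬝ᵥ B *ᵥ v = v ⬝ᵥ w := by
    rw [dotProduct_comm, mulVec_dotProduct_eq_dotProduct_transpose_mulVec]
  have hRy : R *ᵥ u ⬝ᵥ y = u ⬝ᵥ w := by
    rw [mulVec_dotProduct_eq_dotProduct_transpose_mulVec, hR.eq, hRRinv]
  rw [hgain]
  simp only [mulVec_add, mulVec_sub, mulVec_neg, add_dotProduct, dotProduct_add,
    sub_dotProduct, dotProduct_sub, neg_dotProduct, dotProduct_neg, hRRinv] at hARE_x ⊢
  rw [hAtN, hNA, hNB] at hARE_x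
  rw [hNA, hNB, hNxB, hRy]
  linear_combination -hARE_x + dotProduct_comm w u + dotProduct_comm w y

theorem HasDerivAt.riccati_value (hR : R.IsSymm) (hRdet : IsUnit R.det) (hN : N.IsSymm)
    (hARE : Aᵀ * N + N * A - N * B * R⁻¹ * Bᵀ * N = -Q) {z : ℝ → n → ℝ} {u : m → ℝ} {t : ℝ}
    (hz : HasDerivAt z (-(A *ᵥ z t) - B *ᵥ u) t) :
    HasDerivAt (fun t => N *ᵥ z t ⬝ᵥ z t)
      (Q *ᵥ z t ⬝ᵥ z t + R *ᵥ u ⬝ᵥ u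
        - R *ᵥ (u + (R⁻¹ * Bᵀ * N) *ᵥ z t) ⬝ᵥ (u + (R⁻¹ * Bᵀ * N) *ᵥ z t)) t := by
  rw [← riccati_dotProduct_identity hR hRdet hN hARE]
  exact (hz.matrix_mulVec N).dotProduct hz

end Riccati

theorem hasDerivAt_exp_neg_smul_feedback_mulVec {n m : Type*} [Fintype n] [Fintype m]
    [DecidableEq n] [DecidableEq m] (A N : Matrix n n ℝ) (B : Matrix n m ℝ) (R : Matrix m m ℝ)
    (z₁ : n → ℝ) (t : ℝ) :
    HasDerivAt (fun s => NormedSpace.exp ((-s) • (A - B * R⁻¹ * Bᵀ * N)) *ᵥ z₁)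
      (-(A *ᵥ (NormedSpace.exp ((-t) • (A - B * R⁻¹ * Bᵀ * N)) *ᵥ z₁))
        - B *ᵥ (-((R⁻¹ * Bᵀ * N) *ᵥ
          (NormedSpace.exp ((-t) • (A - B * R⁻¹ * Bᵀ * N)) *ᵥ z₁)))) t := by
  refine ((hasDerivAt_exp_smul_mulVec (A - B * R⁻¹ * Bᵀ * N) z₁ (-t)).scomp t
    (hasDerivAt_neg t)).congr_deriv ?_
  generalize NormedSpace.exp ((-t) • (A - B * R⁻¹ * Bᵀ * N)) *ᵥ z₁ = x
  simp only [neg_one_smul, sub_mulVec, mulVec_neg, mulVec_mulVec, Matrix.mul_assoc]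
  abel

theorem backward_stabilization_optimal_general
    (n m : ℕ)
    (A : Matrix (Fin n) (Fin n) ℝ) (B : Matrix (Fin n) (Fin m) ℝ)
    (Q : Matrix (Fin n) (Fin n) ℝ) (hQ : Q.PosDef)
    (R : Matrix (Fin m) (Fin m) ℝ) (hR : R.PosDef)
    (N : Matrix (Fin n) (Fin n) ℝ) (hNsymm : Nᵀ = N)
    (hARE : Aᵀ * N + N * A - N * B * R⁻¹ * Bᵀ * N = -Q)
    (M ν : ℝ) (hν : 0 < ν)
    (hstab : ∀ t : ℝ, 0 ≤ t → ∀ x : Fin n → ℝ,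
      Real.sqrt ((NormedSpace.exp ((-t) • (A - B * R⁻¹ * Bᵀ * N))).mulVec x ⬝ᵥ
          (NormedSpace.exp ((-t) • (A - B * R⁻¹ * Bᵀ * N))).mulVec x)
        ≤ M * Real.exp (-ν * t) * Real.sqrt (x ⬝ᵥ x))
    (z₁ : Fin n → ℝ) :
    -- (a) optimality of the feedback pair
    ((∀ t ∈ Set.Ici (0 : ℝ),
        HasDerivWithinAt (fun s => (NormedSpace.exp ((-s) • (A - B * R⁻¹ * Bᵀ * N))).mulVec z₁)
          (-(A.mulVec ((NormedSpace.exp ((-t) • (A - B * R⁻¹ * Bᵀ * N))).mulVec z₁))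
            - B.mulVec (-(R⁻¹ * Bᵀ * N).mulVec
                ((NormedSpace.exp ((-t) • (A - B * R⁻¹ * Bᵀ * N))).mulVec z₁)))
          (Set.Ici 0) t) ∧
      (NormedSpace.exp ((-(0 : ℝ)) • (A - B * R⁻¹ * Bᵀ * N))).mulVec z₁ = z₁ ∧
      Filter.Tendsto (fun t : ℝ => (NormedSpace.exp ((-t) • (A - B * R⁻¹ * Bᵀ * N))).mulVec z₁)
        Filter.atTop (nhds 0) ∧
      (1 / 2) * ∫ t in Set.Ioi (0 : ℝ),
          (Q.mulVec ((NormedSpace.exp ((-t) • (A - B * R⁻¹ * Bᵀ * N))).mulVec z₁) ⬝ᵥ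
              (NormedSpace.exp ((-t) • (A - B * R⁻¹ * Bᵀ * N))).mulVec z₁
            + R.mulVec (-(R⁻¹ * Bᵀ * N).mulVec
                  ((NormedSpace.exp ((-t) • (A - B * R⁻¹ * Bᵀ * N))).mulVec z₁)) ⬝ᵥ
                (-(R⁻¹ * Bᵀ * N).mulVec
                  ((NormedSpace.exp ((-t) • (A - B * R⁻¹ * Bᵀ * N))).mulVec z₁)))
        = -(1 / 2) * (N.mulVec z₁ ⬝ᵥ z₁))
    ∧
    -- (b) the optimal value is a lower bound
    (∀ z : ℝ → Fin n → ℝ, ∀ v : ℝ → Fin m → ℝ,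
      (∀ t ∈ Set.Ici (0 : ℝ),
        HasDerivWithinAt z (-(A.mulVec (z t)) - B.mulVec (v t)) (Set.Ici 0) t) →
      ContinuousOn v (Set.Ici 0) →
      z 0 = z₁ →
      Filter.Tendsto z Filter.atTop (nhds 0) →
      IntegrableOn (fun t => Q.mulVec (z t) ⬝ᵥ z t + R.mulVec (v t) ⬝ᵥ v t) (Set.Ici 0) →
      -(1 / 2) * (N.mulVec z₁ ⬝ᵥ z₁)
        ≤ (1 / 2) * ∫ t in Set.Ioi (0 : ℝ),
            (Q.mulVec (z t) ⬝ᵥ z t + R.mulVec (v t) ⬝ᵥ v t)) := by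
  have hRsymm : R.IsSymm := isHermitian_iff_isSymm.mp hR.isHermitian
  have hRdet : IsUnit R.det := hR.det_pos.ne'.isUnit
  have hzb := hasDerivAt_exp_neg_smul_feedback_mulVec A N B R z₁
  have hzb_tendsto : Tendsto (fun t : ℝ => NormedSpace.exp ((-t) • (A - B * R⁻¹ * Bᵀ * N)) *ᵥ z₁)
      atTop (𝓝 0) :=
    tendsto_zero_of_sqrt_dotProduct_self_le (tendsto_mul_exp_neg_mul_mul_atTop M _ hν)
      ((eventually_ge_atTop 0).mono fun t ht => hstab t ht z₁)
  refine ⟨⟨fun t _ => (hzb t).hasDerivWithinAt, by simp, hzb_tendsto, ?_⟩, ?_⟩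
  · rw [integral_Ioi_of_hasDerivAt_of_nonneg' (fun t _ => ?_) (fun t _ => ?_)
      (hzb_tendsto.mulVec_dotProduct_self N)]
    · simp
    · simpa only [neg_add_cancel, mulVec_zero, dotProduct_zero, sub_zero] using
        (hzb t).riccati_value hRsymm hRdet hNsymm hARE
    · exact add_nonneg (hQ.posSemidef.mulVec_dotProduct_self_nonneg _)
        (hR.posSemidef.mulVec_dotProduct_self_nonneg _)
  · intro z v hz _ hz0 hzlim hint
    have hcont : ContinuousOn (fun t => N *ᵥ z t ⬝ᵥ z t) (Ici 0) :=
      (continuous_mulVec_dotProduct_self N).comp_continuousOn fun t ht =>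
        (hz t ht).continuousWithinAt
    have hvalue := sub_le_integral_Ioi_of_hasDerivAt_of_le hcont
      (fun t ht => ((hz t (mem_Ici_of_Ioi ht)).hasDerivAt (Ici_mem_nhds ht)).riccati_value
        hRsymm hRdet hNsymm hARE)
      (hint.mono_set Ioi_subset_Ici_self)
      (fun t _ => sub_le_self _ (hR.posSemidef.mulVec_dotProduct_self_nonneg _))
      (hzlim.mulVec_dotProduct_self N)
    rw [hz0] at hvalue
    linarith

/-- the Riccati feedback solves the backward stabilization problem with optimal
value `−½⟨N z₁, z₁⟩`, and this value is a lower bound for all admissible pairs.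
The operator norm bound `‖exp(−tA₊)‖ ≤ M e^{-νt}` (Euclidean operator norm) is expressed
through the action on vectors, with the Euclidean norm written as `√(x ⬝ᵥ x)`. -/
theorem backward_stabilization_optimal
    (n m : ℕ) (hn : 1 ≤ n) (hm : 1 ≤ m)
    (A : Matrix (Fin n) (Fin n) ℝ) (B : Matrix (Fin n) (Fin m) ℝ)
    (Q : Matrix (Fin n) (Fin n) ℝ) (hQ : Q.PosDef)
    (R : Matrix (Fin m) (Fin m) ℝ) (hR : R.PosDef)
    (N : Matrix (Fin n) (Fin n) ℝ) (hN : (-N).PosDef) (hNsymm : Nᵀ = N)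
    (hARE : Aᵀ * N + N * A - N * B * R⁻¹ * Bᵀ * N = -Q)
    (M ν : ℝ) (hM : 1 ≤ M) (hν : 0 < ν)
    (hstab : ∀ t : ℝ, 0 ≤ t → ∀ x : Fin n → ℝ,
      Real.sqrt ((NormedSpace.exp ((-t) • (A - B * R⁻¹ * Bᵀ * N))).mulVec x ⬝ᵥ
          (NormedSpace.exp ((-t) • (A - B * R⁻¹ * Bᵀ * N))).mulVec x)
        ≤ M * Real.exp (-ν * t) * Real.sqrt (x ⬝ᵥ x))
    (z₁ : Fin n → ℝ) :
    -- (a) optimality of the feedback pair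
    ((∀ t ∈ Set.Ici (0 : ℝ),
        HasDerivWithinAt (fun s => (NormedSpace.exp ((-s) • (A - B * R⁻¹ * Bᵀ * N))).mulVec z₁)
          (-(A.mulVec ((NormedSpace.exp ((-t) • (A - B * R⁻¹ * Bᵀ * N))).mulVec z₁))
            - B.mulVec (-(R⁻¹ * Bᵀ * N).mulVec
                ((NormedSpace.exp ((-t) • (A - B * R⁻¹ * Bᵀ * N))).mulVec z₁)))
          (Set.Ici 0) t) ∧
      (NormedSpace.exp ((-(0 : ℝ)) • (A - B * R⁻¹ * Bᵀ * N))).mulVec z₁ = z₁ ∧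
      Filter.Tendsto (fun t : ℝ => (NormedSpace.exp ((-t) • (A - B * R⁻¹ * Bᵀ * N))).mulVec z₁)
        Filter.atTop (nhds 0) ∧
      (1 / 2) * ∫ t in Set.Ioi (0 : ℝ),
          (Q.mulVec ((NormedSpace.exp ((-t) • (A - B * R⁻¹ * Bᵀ * N))).mulVec z₁) ⬝ᵥ
              (NormedSpace.exp ((-t) • (A - B * R⁻¹ * Bᵀ * N))).mulVec z₁
            + R.mulVec (-(R⁻¹ * Bᵀ * N).mulVec
                  ((NormedSpace.exp ((-t) • (A - B * R⁻¹ * Bᵀ * N))).mulVec z₁)) ⬝ᵥ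
                (-(R⁻¹ * Bᵀ * N).mulVec
                  ((NormedSpace.exp ((-t) • (A - B * R⁻¹ * Bᵀ * N))).mulVec z₁)))
        = -(1 / 2) * (N.mulVec z₁ ⬝ᵥ z₁))
    ∧
    -- (b) the optimal value is a lower bound
    (∀ z : ℝ → Fin n → ℝ, ∀ v : ℝ → Fin m → ℝ,
      (∀ t ∈ Set.Ici (0 : ℝ),
        HasDerivWithinAt z (-(A.mulVec (z t)) - B.mulVec (v t)) (Set.Ici 0) t) →
      ContinuousOn v (Set.Ici 0) →
      z 0 = z₁ →
      Filter.Tendsto z Filter.atTop (nhds 0) →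
      IntegrableOn (fun t => Q.mulVec (z t) ⬝ᵥ z t + R.mulVec (v t) ⬝ᵥ v t) (Set.Ici 0) →
      -(1 / 2) * (N.mulVec z₁ ⬝ᵥ z₁)
        ≤ (1 / 2) * ∫ t in Set.Ioi (0 : ℝ),
            (Q.mulVec (z t) ⬝ᵥ z t + R.mulVec (v t) ⬝ᵥ v t)) :=
  backward_stabilization_optimal_general n m A B Q hQ R hR N hNsymm hARE M ν hν hstab z₁
end
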